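/- arXiv:2603.14094 — 4 statements merged into one kernel-verified Lean document; each statement's English description precedes it below -/
import Mathlib

section
/- Sibson's α-mutual information admits the risk-sensitive decomposition I_α^S = (α/(α−1)) log E_{p(x)}[ exp( ((α−1)/α) · D_α(p(θ|x) ‖ p(θ)) ) ], where D_α(p(θ|x)‖p(θ)) is the Rényi divergence of order α between posterior and prior. -/
open MeasureTheory Real

noncomputable section

/-- Sibson's α-mutual information admits the risk-sensitive decomposition
`I_α^S = (α/(α−1)) log E_{p(x)}[exp(((α−1)/α) D_α(p(θ|x) ‖ p(θ)))]`,
where `D_α` is the Rényi divergence of order `α` between posterior and prior. -/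
theorem sibson_risk_sensitive_decomposition
    {Θ X : Type*} [MeasurableSpace Θ] [MeasurableSpace X]
    (μΘ : Measure Θ) (μX : Measure X) [SigmaFinite μΘ] [SigmaFinite μX]
    (prior : Θ → ℝ) (lik : Θ → X → ℝ)
    (α : ℝ) (hα : α ∈ Set.Ioo (0 : ℝ) 1)
    (hprior_nonneg : ∀ θ, 0 ≤ prior θ)
    (hprior_prob : ∫ θ, prior θ ∂μΘ = 1)
    (hlik_nonneg : ∀ θ x, 0 ≤ lik θ x)
    (px : X → ℝ) (hpx : ∀ x, px x = ∫ θ, prior θ * lik θ x ∂μΘ)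
    (hpx_pos : ∀ x, 0 < px x)
    (hpx_prob : ∫ x, px x ∂μX = 1)
    (post : X → Θ → ℝ) (hpost : ∀ x θ, post x θ = prior θ * lik θ x / px x)
    (renyiPostPrior : X → ℝ)
    (hrenyi : ∀ x, renyiPostPrior x
      = (1 / (α - 1)) * Real.log (∫ θ, (post x θ) ^ α * (prior θ) ^ (1 - α) ∂μΘ))
    (hinner_pos : ∀ x, 0 < ∫ θ, (post x θ) ^ α * (prior θ) ^ (1 - α) ∂μΘ)
    (hint₁ : Integrable (fun x => (∫ θ, prior θ * (lik θ x) ^ α ∂μΘ) ^ (1 / α)) μX)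
    (hint₂ : Integrable
      (fun x => px x * Real.exp (((α - 1) / α) * renyiPostPrior x)) μX) :
    (α / (α - 1)) * Real.log (∫ x, (∫ θ, prior θ * (lik θ x) ^ α ∂μΘ) ^ (1 / α) ∂μX)
      = (α / (α - 1)) * Real.log
          (∫ x, px x * Real.exp (((α - 1) / α) * renyiPostPrior x) ∂μX) := by
  obtain ⟨hα0, hα1⟩ := hα
  have hαne : α ≠ 0 := ne_of_gt hα0
  have hα1ne : α - 1 ≠ 0 := sub_ne_zero.mpr (ne_of_lt hα1)
  -- inner integrand rewrite
  have hinner : ∀ x, (∫ θ, (post x θ) ^ α * (prior θ) ^ (1 - α) ∂μΘ)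
      = (∫ θ, prior θ * (lik θ x) ^ α ∂μΘ) * (px x) ^ (-α) := by
    intro x
    have hfun : ∀ θ, (post x θ) ^ α * (prior θ) ^ (1 - α)
        = (prior θ * (lik θ x) ^ α) * (px x) ^ (-α) := by
      intro θ
      rw [hpost]
      have hpxp := hpx_pos x
      rcases eq_or_lt_of_le (hprior_nonneg θ) with h0 | hp
      · rw [← h0]
        simp [Real.zero_rpow hαne, Real.zero_rpow (by linarith : (1:ℝ) - α ≠ 0)]
      · have hpr : (prior θ) ^ α * (prior θ) ^ (1 - α) = prior θ := by
          rw [← Real.rpow_add hp]; simp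
        rw [div_rpow (mul_nonneg (hprior_nonneg θ) (hlik_nonneg θ x)) hpxp.le,
          Real.mul_rpow (hprior_nonneg θ) (hlik_nonneg θ x),
          Real.rpow_neg hpxp.le, div_eq_mul_inv]
        linear_combination (lik θ x ^ α * (px x ^ α)⁻¹) * hpr
    simp_rw [hfun]
    rw [integral_mul_const]
  -- pointwise equality of the two outer integrands
  have key : ∀ x, px x * Real.exp (((α - 1) / α) * renyiPostPrior x)
      = (∫ θ, prior θ * (lik θ x) ^ α ∂μΘ) ^ (1 / α) := by
    intro x
    have hpxp := hpx_pos x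
    have hApos : 0 < ∫ θ, prior θ * (lik θ x) ^ α ∂μΘ := by
      have h := hinner_pos x
      rw [hinner x] at h
      have hpow : 0 < (px x) ^ (-α) := Real.rpow_pos_of_pos hpxp _
      by_contra hle
      push_neg at hle
      nlinarith
    rw [hrenyi x]
    have hc : ((α - 1) / α) * ((1 / (α - 1)) * Real.log
        (∫ θ, (post x θ) ^ α * (prior θ) ^ (1 - α) ∂μΘ))
        = (1 / α) * Real.log (∫ θ, (post x θ) ^ α * (prior θ) ^ (1 - α) ∂μΘ) := by
      field_simp
    rw [hc, hinner x]
    have hB : (0:ℝ) < (∫ θ, prior θ * (lik θ x) ^ α ∂μΘ) * (px x) ^ (-α) := by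
      have := hinner_pos x
      rwa [hinner x] at this
    rw [show (1 / α) * Real.log ((∫ θ, prior θ * (lik θ x) ^ α ∂μΘ) * (px x) ^ (-α))
        = Real.log (((∫ θ, prior θ * (lik θ x) ^ α ∂μΘ) * (px x) ^ (-α)) ^ (1/α)) from
        (Real.log_rpow hB _).symm, Real.exp_log (Real.rpow_pos_of_pos hB _)]
    rw [Real.mul_rpow hApos.le (Real.rpow_pos_of_pos hpxp (-α)).le,
      ← Real.rpow_mul hpxp.le]
    have hexp : -α * (1 / α) = -1 := by field_simp
    rw [hexp, Real.rpow_neg_one]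
    field_simp
  have hIeq : (∫ x, (∫ θ, prior θ * (lik θ x) ^ α ∂μΘ) ^ (1 / α) ∂μX)
      = ∫ x, px x * Real.exp (((α - 1) / α) * renyiPostPrior x) ∂μX :=
    integral_congr_ae (Filter.Eventually.of_forall fun x => (key x).symm)
  rw [hIeq]

end
end

section
/- Under the assumption that the geometric average log-likelihood H_0 = ∫ exp{∫ p(θ) log p(x|θ) dθ} dx satisfies 1 ≥ H_0 ≥ C_0 > 0 and the expected surprise ∫ p(θ) max{1, p(x|θ)} |log p(x|θ)| dθ is finite for all x, Sibson's α-mutual information I_α^S converges to 0 as α → 0⁺. -/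
open MeasureTheory Real Filter

noncomputable section

section Aux
variable {Θ : Type*} [MeasurableSpace Θ] {μ : Measure Θ}

/-- transfer of a.e.-strong-measurability from `w·log L` to `w·L^α`. -/
lemma aesm_mul_rpow_of_aesm_mul_log {w L : Θ → ℝ} (hw : AEStronglyMeasurable w μ)
    (hL : ∀ θ, 0 < L θ)
    (h : AEStronglyMeasurable (fun θ => w θ * Real.log (L θ)) μ) (α : ℝ) :
    AEStronglyMeasurable (fun θ => w θ * (L θ) ^ α) μ := by
  have hwm : AEMeasurable w μ := hw.aemeasurable
  have hgm : AEMeasurable (fun θ => w θ * Real.log (L θ)) μ := h.aemeasurable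
  set w' := hwm.mk w with hw'
  set g' := hgm.mk _ with hg'
  have hφ : Measurable (fun θ => if w' θ = 0 then (0:ℝ) else
      w' θ * Real.exp (α * (g' θ / w' θ))) := by
    refine Measurable.ite (hwm.measurable_mk (measurableSet_singleton 0)) measurable_const ?_
    exact (hwm.measurable_mk).mul
      ((Real.measurable_exp).comp (measurable_const.mul
        ((hgm.measurable_mk).div hwm.measurable_mk)))
  rw [aestronglyMeasurable_iff_aemeasurable]
  refine ⟨_, hφ, ?_⟩
  filter_upwards [hwm.ae_eq_mk, hgm.ae_eq_mk] with θ h1 h2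
  have hw0 : w' θ = w θ := h1.symm
  have hg0 : g' θ = w θ * Real.log (L θ) := h2.symm
  by_cases h0 : w θ = 0
  · rw [if_pos (hw0.trans h0), h0, zero_mul]
  · rw [if_neg (fun hc => h0 (hw0.symm.trans hc)), hw0, hg0,
      mul_comm (w θ) (Real.log (L θ)), mul_div_assoc, div_self h0, mul_one,
      Real.rpow_def_of_pos (hL θ), mul_comm (Real.log (L θ)) α]

/-- transfer of a.e.-strong-measurability from `w·L^α` to `w·log L`. -/
lemma aesm_mul_log_of_aesm_mul_rpow {w L : Θ → ℝ} (hw : AEStronglyMeasurable w μ)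
    (hL : ∀ θ, 0 < L θ) {α : ℝ} (hα : α ≠ 0)
    (h : AEStronglyMeasurable (fun θ => w θ * (L θ) ^ α) μ) :
    AEStronglyMeasurable (fun θ => w θ * Real.log (L θ)) μ := by
  have hwm : AEMeasurable w μ := hw.aemeasurable
  have hgm : AEMeasurable (fun θ => w θ * (L θ) ^ α) μ := h.aemeasurable
  have hφ : Measurable (fun θ => if hwm.mk w θ = 0 then (0:ℝ) else
      hwm.mk w θ * (Real.log (hgm.mk _ θ / hwm.mk w θ) / α)) := by
    refine Measurable.ite (hwm.measurable_mk (measurableSet_singleton 0)) measurable_const ?_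
    exact (hwm.measurable_mk).mul
      (((Real.measurable_log).comp ((hgm.measurable_mk).div hwm.measurable_mk)).div
        measurable_const)
  rw [aestronglyMeasurable_iff_aemeasurable]
  refine ⟨_, hφ, ?_⟩
  filter_upwards [hwm.ae_eq_mk, hgm.ae_eq_mk] with θ h1 h2
  by_cases h0 : w θ = 0
  · rw [if_pos (h1.symm.trans h0), h0, zero_mul]
  · rw [if_neg (fun hc => h0 (h1.trans hc)), ← h1, ← h2,
      mul_comm (w θ) ((L θ) ^ α), mul_div_assoc, div_self h0, mul_one,
      Real.log_rpow (hL θ), mul_comm α (Real.log (L θ)), mul_div_assoc,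
      div_self hα, mul_one]

/-- Jensen's inequality (tangent-line form) for the exponential. -/
lemma jensen_lower {w L : Θ → ℝ} (hw : Integrable w μ) (hw0 : ∀ θ, 0 ≤ w θ)
    (hw1 : ∫ θ, w θ ∂μ = 1) (hL : ∀ θ, 0 < L θ)
    (hlog : Integrable (fun θ => w θ * Real.log (L θ)) μ)
    (α : ℝ)
    (hint : Integrable (fun θ => w θ * L θ ^ α) μ) :
    Real.exp (α * ∫ θ, w θ * Real.log (L θ) ∂μ) ≤ ∫ θ, w θ * L θ ^ α ∂μ := by
  set c : ℝ := α * ∫ θ, w θ * Real.log (L θ) ∂μ with hc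
  have hpt : ∀ θ, Real.exp c * ((1 - c) * w θ + α * (w θ * Real.log (L θ)))
      ≤ w θ * L θ ^ α := by
    intro θ
    have h1 : Real.exp c * (1 + (α * Real.log (L θ) - c))
        ≤ Real.exp (α * Real.log (L θ)) := by
      have := Real.add_one_le_exp (α * Real.log (L θ) - c)
      calc Real.exp c * (1 + (α * Real.log (L θ) - c))
          ≤ Real.exp c * Real.exp (α * Real.log (L θ) - c) := by
            apply mul_le_mul_of_nonneg_left _ (Real.exp_pos c).le
            linarith
        _ = Real.exp (α * Real.log (L θ)) := by rw [← Real.exp_add]; congr 1; ring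
    have h2 : L θ ^ α = Real.exp (α * Real.log (L θ)) := by
      rw [Real.rpow_def_of_pos (hL θ), mul_comm]
    calc Real.exp c * ((1 - c) * w θ + α * (w θ * Real.log (L θ)))
        = w θ * (Real.exp c * (1 + (α * Real.log (L θ) - c))) := by ring
      _ ≤ w θ * Real.exp (α * Real.log (L θ)) :=
          mul_le_mul_of_nonneg_left h1 (hw0 θ)
      _ = w θ * L θ ^ α := by rw [h2]
  have hlhs : Integrable (fun θ => Real.exp c * ((1 - c) * w θ
      + α * (w θ * Real.log (L θ)))) μ :=
    ((hw.const_mul (1 - c)).add (hlog.const_mul α)).const_mul (Real.exp c)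
  have hmono := integral_mono hlhs hint hpt
  calc Real.exp c = Real.exp c * ((1 - c) * 1 + α * ∫ θ, w θ * Real.log (L θ) ∂μ) := by
        rw [hc]; ring
    _ = ∫ θ, Real.exp c * ((1 - c) * w θ + α * (w θ * Real.log (L θ))) ∂μ := by
        rw [integral_const_mul, integral_add (hw.const_mul _) (hlog.const_mul _),
          integral_const_mul, integral_const_mul, hw1]
    _ ≤ ∫ θ, w θ * L θ ^ α ∂μ := hmono

/-- power-mean upper bound (tangent-line / AM-GM form). -/
lemma power_mean_upper {w L : Θ → ℝ} (hw : Integrable w μ) (hw0 : ∀ θ, 0 ≤ w θ)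
    (hw1 : ∫ θ, w θ ∂μ = 1) (hL : ∀ θ, 0 < L θ)
    (hM : 0 < ∫ θ, w θ * L θ ∂μ)
    {α : ℝ} (hα : 0 < α) (hα1 : α < 1)
    (hint : Integrable (fun θ => w θ * L θ ^ α) μ)
    (hintM : Integrable (fun θ => w θ * L θ) μ) :
    ∫ θ, w θ * L θ ^ α ∂μ ≤ (∫ θ, w θ * L θ ∂μ) ^ α := by
  set M : ℝ := ∫ θ, w θ * L θ ∂μ with hMdef
  have hMne : M ≠ 0 := hM.ne'
  have hpt : ∀ θ, w θ * L θ ^ α ≤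
      M ^ α * ((α / M) * (w θ * L θ) + (1 - α) * w θ) := by
    intro θ
    have hgm := Real.geom_mean_le_arith_mean2_weighted hα.le (by linarith : (0:ℝ) ≤ 1 - α)
      (div_pos (hL θ) hM).le zero_le_one (by ring)
    rw [Real.one_rpow, mul_one, mul_one] at hgm
    have hLM : L θ ^ α = (L θ / M) ^ α * M ^ α := by
      rw [Real.div_rpow (hL θ).le hM.le]
      field_simp
    have hMα : (0:ℝ) < M ^ α := Real.rpow_pos_of_pos hM α
    calc w θ * L θ ^ α = (L θ / M) ^ α * (M ^ α * w θ) := by rw [hLM]; ring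
      _ ≤ (α * (L θ / M) + (1 - α)) * (M ^ α * w θ) := by
          apply mul_le_mul_of_nonneg_right hgm
          exact mul_nonneg hMα.le (hw0 θ)
      _ = M ^ α * ((α / M) * (w θ * L θ) + (1 - α) * w θ) := by
          field_simp
  have hrhs : Integrable (fun θ => M ^ α * ((α / M) * (w θ * L θ)
      + (1 - α) * w θ)) μ :=
    ((hintM.const_mul (α / M)).add (hw.const_mul (1 - α))).const_mul (M ^ α)
  have hmono := integral_mono hint hrhs hpt
  calc ∫ θ, w θ * L θ ^ α ∂μ
      ≤ ∫ θ, M ^ α * ((α / M) * (w θ * L θ) + (1 - α) * w θ) ∂μ := hmono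
    _ = M ^ α * ((α / M) * M + (1 - α) * 1) := by
        rw [integral_const_mul, integral_add (hintM.const_mul _) (hw.const_mul _),
          integral_const_mul, integral_const_mul, hw1, ← hMdef]
    _ = M ^ α := by field_simp; ring

lemma max_le_aux {t : ℝ} (ht : 0 < t) :
    max 1 t ≤ Real.exp 1 + max 1 t * |Real.log t| := by
  rcases le_total t (Real.exp 1) with h | h
  · have h1 : max 1 t ≤ Real.exp 1 := max_le (by
      have := Real.add_one_le_exp 1; linarith) h
    nlinarith [abs_nonneg (Real.log t), le_max_left 1 t,
      mul_nonneg (le_trans zero_le_one (le_max_left 1 t)) (abs_nonneg (Real.log t))]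
  · have h1 : 1 ≤ Real.log t := (Real.le_log_iff_exp_le ht).mpr h
    have habs : |Real.log t| = Real.log t := abs_of_nonneg (by linarith)
    have hm : max 1 t = t := max_eq_right (le_trans (by
      have := Real.add_one_le_exp 1; linarith) h)
    rw [habs, hm]
    nlinarith [Real.exp_pos 1]

end Aux

/-- Under a finite-expected-surprise assumption and a uniform positive lower bound
`C₀` on the geometric average log-likelihood `H₀ = ∫ exp{∫ p(θ) log p(x|θ) dθ} dx`
with `H₀ ≤ 1`, Sibson's α-mutual information tends to `0` as `α → 0⁺`. -/
theorem sibson_tendsto_zero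
    {Θ X : Type*} [MeasurableSpace Θ] [MeasurableSpace X]
    (μΘ : Measure Θ) (μX : Measure X) [SigmaFinite μΘ] [SigmaFinite μX]
    (prior : Θ → ℝ) (lik : Θ → X → ℝ)
    (hprior_nonneg : ∀ θ, 0 ≤ prior θ)
    (hprior_prob : ∫ θ, prior θ ∂μΘ = 1)
    (hlik_pos : ∀ θ x, 0 < lik θ x)
    (hjoint_prob : ∫ x, ∫ θ, prior θ * lik θ x ∂μΘ ∂μX = 1)
    (hsurprise : ∀ x, Integrable
      (fun θ => prior θ * max 1 (lik θ x) * |Real.log (lik θ x)|) μΘ)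
    (C₀ : ℝ) (hC₀ : 0 < C₀)
    (hH₀_lb : C₀ < ∫ x, Real.exp (∫ θ, prior θ * Real.log (lik θ x) ∂μΘ) ∂μX)
    (hH₀_ub : ∫ x, Real.exp (∫ θ, prior θ * Real.log (lik θ x) ∂μΘ) ∂μX ≤ 1) :
    Tendsto
      (fun α : ℝ => (α / (α - 1)) * Real.log
        (∫ x, (∫ θ, prior θ * (lik θ x) ^ α ∂μΘ) ^ (1 / α) ∂μX))
      (nhdsWithin 0 (Set.Ioi (0 : ℝ))) (nhds 0) := by
  -- basic integrability facts
  have hwInt : Integrable prior μΘ := by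
    by_contra h
    rw [integral_undef h] at hprior_prob
    norm_num at hprior_prob
  have hwAESM : AEStronglyMeasurable prior μΘ := hwInt.aestronglyMeasurable
  have hMInt : Integrable (fun x => ∫ θ, prior θ * lik θ x ∂μΘ) μX := by
    by_contra h
    rw [integral_undef h] at hjoint_prob
    norm_num at hjoint_prob
  have hEInt : Integrable
      (fun x => Real.exp (∫ θ, prior θ * Real.log (lik θ x) ∂μΘ)) μX := by
    by_contra h
    rw [integral_undef h] at hH₀_lb
    linarith
  -- nonnegativity of the inner integrals and their powers
  have hSnonneg : ∀ (α : ℝ) x, 0 ≤ ∫ θ, prior θ * lik θ x ^ α ∂μΘ := fun α x =>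
    integral_nonneg fun θ => mul_nonneg (hprior_nonneg θ)
      (Real.rpow_nonneg (hlik_pos θ x).le α)
  have hGnonneg : ∀ (α : ℝ) x, 0 ≤ (∫ θ, prior θ * lik θ x ^ α ∂μΘ) ^ (1/α) :=
    fun α x => Real.rpow_nonneg (hSnonneg α x) _
  have hMnonneg : ∀ x, 0 ≤ ∫ θ, prior θ * lik θ x ∂μΘ := fun x =>
    integral_nonneg fun θ => mul_nonneg (hprior_nonneg θ) (hlik_pos θ x).le
  -- integrability (on Θ) from measurability of prior·log lik
  have hlogInt : ∀ x, AEStronglyMeasurable (fun θ => prior θ * Real.log (lik θ x)) μΘ →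
      Integrable (fun θ => prior θ * Real.log (lik θ x)) μΘ := by
    intro x hx
    refine (hsurprise x).mono' hx (ae_of_all _ fun θ => ?_)
    rw [Real.norm_eq_abs, abs_mul, abs_of_nonneg (hprior_nonneg θ)]
    have h1 : (1:ℝ) ≤ max 1 (lik θ x) := le_max_left _ _
    nlinarith [hprior_nonneg θ, abs_nonneg (Real.log (lik θ x)),
      mul_nonneg (hprior_nonneg θ) (abs_nonneg (Real.log (lik θ x)))]
  have hrpowInt : ∀ x, AEStronglyMeasurable (fun θ => prior θ * Real.log (lik θ x)) μΘ →
      ∀ α : ℝ, 0 < α → α ≤ 1 →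
      Integrable (fun θ => prior θ * lik θ x ^ α) μΘ := by
    intro x hx α hα hα1
    have haesm := aesm_mul_rpow_of_aesm_mul_log hwAESM (fun θ => hlik_pos θ x) hx α
    have hdom : Integrable (fun θ => Real.exp 1 * prior θ
        + prior θ * max 1 (lik θ x) * |Real.log (lik θ x)|) μΘ :=
      (hwInt.const_mul _).add (hsurprise x)
    refine hdom.mono' haesm (ae_of_all _ fun θ => ?_)
    rw [Real.norm_eq_abs, abs_of_nonneg (mul_nonneg (hprior_nonneg θ)
      (Real.rpow_nonneg (hlik_pos θ x).le α))]
    have hle : lik θ x ^ α ≤ max 1 (lik θ x) := by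
      rcases le_total (lik θ x) 1 with h | h
      · exact le_trans (Real.rpow_le_one (hlik_pos θ x).le h hα.le) (le_max_left _ _)
      · calc lik θ x ^ α ≤ lik θ x ^ (1:ℝ) :=
              Real.rpow_le_rpow_of_exponent_le h hα1
          _ = lik θ x := Real.rpow_one _
          _ ≤ max 1 (lik θ x) := le_max_right _ _
    have hmax := max_le_aux (hlik_pos θ x)
    calc prior θ * lik θ x ^ α ≤ prior θ * max 1 (lik θ x) :=
          mul_le_mul_of_nonneg_left hle (hprior_nonneg θ)
      _ ≤ prior θ * (Real.exp 1 + max 1 (lik θ x) * |Real.log (lik θ x)|) :=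
          mul_le_mul_of_nonneg_left hmax (hprior_nonneg θ)
      _ = Real.exp 1 * prior θ + prior θ * max 1 (lik θ x) * |Real.log (lik θ x)| := by
          ring
  -- the key pointwise (in x) estimates
  have hkey_good : ∀ x, AEStronglyMeasurable (fun θ => prior θ * Real.log (lik θ x)) μΘ →
      ∀ α : ℝ, 0 < α → α < 1 →
      Real.exp (∫ θ, prior θ * Real.log (lik θ x) ∂μΘ)
        ≤ (∫ θ, prior θ * lik θ x ^ α ∂μΘ) ^ (1/α)
      ∧ (∫ θ, prior θ * lik θ x ^ α ∂μΘ) ^ (1/α) ≤ ∫ θ, prior θ * lik θ x ∂μΘ := by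
    intro x hx α hα hα1
    have hlog := hlogInt x hx
    have hα' := hrpowInt x hx α hα hα1.le
    have h1' : Integrable (fun θ => prior θ * lik θ x) μΘ := by
      have := hrpowInt x hx 1 one_pos le_rfl
      simpa [Real.rpow_one] using this
    have hJ := jensen_lower hwInt hprior_nonneg hprior_prob
      (fun θ => hlik_pos θ x) hlog α hα'
    have hJ1 : Real.exp (∫ θ, prior θ * Real.log (lik θ x) ∂μΘ)
        ≤ ∫ θ, prior θ * lik θ x ∂μΘ := by
      have := jensen_lower hwInt hprior_nonneg hprior_prob
        (fun θ => hlik_pos θ x) hlog 1 (by simpa [Real.rpow_one] using h1')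
      simpa [Real.rpow_one] using this
    have hMpos : 0 < ∫ θ, prior θ * lik θ x ∂μΘ :=
      lt_of_lt_of_le (Real.exp_pos _) hJ1
    constructor
    · have e1 : Real.exp (∫ θ, prior θ * Real.log (lik θ x) ∂μΘ)
          = (Real.exp (α * ∫ θ, prior θ * Real.log (lik θ x) ∂μΘ)) ^ (1/α) := by
        rw [mul_comm α, Real.exp_mul, ← Real.rpow_mul (Real.exp_pos _).le,
          mul_one_div_cancel hα.ne', Real.rpow_one]
      rw [e1]
      exact Real.rpow_le_rpow (Real.exp_pos _).le hJ (by positivity)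
    · have hP := power_mean_upper hwInt hprior_nonneg hprior_prob
        (fun θ => hlik_pos θ x) hMpos hα hα1 hα' h1'
      calc (∫ θ, prior θ * lik θ x ^ α ∂μΘ) ^ (1/α)
          ≤ ((∫ θ, prior θ * lik θ x ∂μΘ) ^ α) ^ (1/α) :=
            Real.rpow_le_rpow (hSnonneg α x) hP (by positivity)
        _ = ∫ θ, prior θ * lik θ x ∂μΘ := by
            rw [← Real.rpow_mul hMpos.le, mul_one_div_cancel hα.ne', Real.rpow_one]
  have hkey_bad : ∀ x,
      ¬ AEStronglyMeasurable (fun θ => prior θ * Real.log (lik θ x)) μΘ →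
      ∀ α : ℝ, 0 < α →
      (∫ θ, prior θ * lik θ x ^ α ∂μΘ) ^ (1/α) = 0 := by
    intro x hx α hα
    have hni : ¬ Integrable (fun θ => prior θ * lik θ x ^ α) μΘ := fun h =>
      hx (aesm_mul_log_of_aesm_mul_rpow hwAESM (fun θ => hlik_pos θ x) hα.ne'
        h.aestronglyMeasurable)
    rw [integral_undef hni, Real.zero_rpow (one_div_ne_zero hα.ne')]
  -- the reference constant
  set c : ℝ := ∫ x, min (Real.exp (∫ θ, prior θ * Real.log (lik θ x) ∂μΘ))
      ((∫ θ, prior θ * lik θ x ^ (1/2 : ℝ) ∂μΘ) ^ (1/(1/2 : ℝ))) ∂μX with hcdef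
  -- the main dichotomy
  have claim : ∀ α : ℝ, 0 < α → α < 1 →
      (∫ x, (∫ θ, prior θ * lik θ x ^ α ∂μΘ) ^ (1/α) ∂μX) = 0 ∨
      (0 < c ∧ c ≤ (∫ x, (∫ θ, prior θ * lik θ x ^ α ∂μΘ) ^ (1/α) ∂μX)
        ∧ (∫ x, (∫ θ, prior θ * lik θ x ^ α ∂μΘ) ^ (1/α) ∂μX) ≤ 1) := by
    intro α hα hα1
    by_cases hI : Integrable (fun x => (∫ θ, prior θ * lik θ x ^ α ∂μΘ) ^ (1/α)) μX
    · have hminEq : ∀ x,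
          min (Real.exp (∫ θ, prior θ * Real.log (lik θ x) ∂μΘ))
            ((∫ θ, prior θ * lik θ x ^ (1/2 : ℝ) ∂μΘ) ^ (1/(1/2 : ℝ)))
          = min (Real.exp (∫ θ, prior θ * Real.log (lik θ x) ∂μΘ))
            ((∫ θ, prior θ * lik θ x ^ α ∂μΘ) ^ (1/α)) := by
        intro x
        by_cases hgood : AEStronglyMeasurable
            (fun θ => prior θ * Real.log (lik θ x)) μΘ
        · rw [min_eq_left (hkey_good x hgood α hα hα1).1,
            min_eq_left (hkey_good x hgood (1/2) (by norm_num) (by norm_num)).1]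
        · rw [hkey_bad x hgood α hα, hkey_bad x hgood (1/2) (by norm_num)]
      have hminNonneg : ∀ x, (0:ℝ) ≤ min
          (Real.exp (∫ θ, prior θ * Real.log (lik θ x) ∂μΘ))
          ((∫ θ, prior θ * lik θ x ^ α ∂μΘ) ^ (1/α)) := fun x =>
        le_min (Real.exp_pos _).le (hGnonneg α x)
      have hminInt : Integrable (fun x => min
          (Real.exp (∫ θ, prior θ * Real.log (lik θ x) ∂μΘ))
          ((∫ θ, prior θ * lik θ x ^ α ∂μΘ) ^ (1/α))) μX := by
        refine hEInt.mono' ?_ (ae_of_all _ fun x => ?_)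
        · exact (hEInt.aestronglyMeasurable.aemeasurable.min
            hI.aestronglyMeasurable.aemeasurable).aestronglyMeasurable
        · rw [Real.norm_eq_abs, abs_of_nonneg (hminNonneg x)]
          exact min_le_left _ _
      have hc_eq : c = ∫ x, min
          (Real.exp (∫ θ, prior θ * Real.log (lik θ x) ∂μΘ))
          ((∫ θ, prior θ * lik θ x ^ α ∂μΘ) ^ (1/α)) ∂μX := by
        rw [hcdef]
        exact integral_congr_ae (ae_of_all _ fun x => hminEq x)
      rcases (integral_nonneg (f := fun x => min
          (Real.exp (∫ θ, prior θ * Real.log (lik θ x) ∂μΘ))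
          ((∫ θ, prior θ * lik θ x ^ α ∂μΘ) ^ (1/α))) hminNonneg).eq_or_lt with h0 | hpos
      · left
        have hae : (fun x => min
            (Real.exp (∫ θ, prior θ * Real.log (lik θ x) ∂μΘ))
            ((∫ θ, prior θ * lik θ x ^ α ∂μΘ) ^ (1/α))) =ᵐ[μX] 0 :=
          (integral_eq_zero_iff_of_nonneg hminNonneg hminInt).mp h0.symm
        have hae2 : (fun x => (∫ θ, prior θ * lik θ x ^ α ∂μΘ) ^ (1/α)) =ᵐ[μX] 0 := by
          filter_upwards [hae] with x hx
          simp only [Pi.zero_apply] at hx ⊢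
          rcases (hGnonneg α x).eq_or_lt with hg | hg
          · exact hg.symm
          · exact absurd hx (ne_of_gt (lt_min (Real.exp_pos _) hg))
        exact integral_eq_zero_of_ae hae2
      · right
        refine ⟨by rwa [hc_eq], ?_, ?_⟩
        · rw [hc_eq]
          exact integral_mono hminInt hI fun x => min_le_right _ _
        · calc (∫ x, (∫ θ, prior θ * lik θ x ^ α ∂μΘ) ^ (1/α) ∂μX)
              ≤ ∫ x, ∫ θ, prior θ * lik θ x ∂μΘ ∂μX := by
                refine integral_mono hI hMInt fun x => ?_
                by_cases hgood : AEStronglyMeasurable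
                    (fun θ => prior θ * Real.log (lik θ x)) μΘ
                · exact (hkey_good x hgood α hα hα1).2
                · rw [hkey_bad x hgood α hα]
                  exact hMnonneg x
            _ = 1 := hjoint_prob
    · left
      exact integral_undef hI
  -- the squeeze
  refine squeeze_zero_norm' (a := fun α : ℝ => α / (1 - α) * max 1 (-Real.log c)) ?_ ?_
  · filter_upwards [Ioo_mem_nhdsGT_of_mem (Set.left_mem_Ico.mpr one_pos)] with α hα
    obtain ⟨hα0, hα1⟩ := hα
    have hb : |Real.log (∫ x, (∫ θ, prior θ * lik θ x ^ α ∂μΘ) ^ (1/α) ∂μX)|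
        ≤ max 1 (-Real.log c) := by
      rcases claim α hα0 hα1 with h | ⟨hc, hcF, hF1⟩
      · rw [h, Real.log_zero, abs_zero]
        exact le_trans zero_le_one (le_max_left _ _)
      · have hF : 0 < ∫ x, (∫ θ, prior θ * lik θ x ^ α ∂μΘ) ^ (1/α) ∂μX :=
          lt_of_lt_of_le hc hcF
        rw [abs_of_nonpos (Real.log_nonpos hF.le hF1)]
        exact le_trans (neg_le_neg (Real.log_le_log hc hcF)) (le_max_right _ _)
    rw [Real.norm_eq_abs, abs_mul]
    have h1 : |α / (α - 1)| = α / (1 - α) := by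
      rw [abs_div, abs_of_pos hα0, abs_of_neg (by linarith : α - 1 < 0)]
      congr 1
      ring
    rw [h1]
    exact mul_le_mul_of_nonneg_left hb (div_nonneg hα0.le (by linarith))
  · have hcont : ContinuousAt (fun α : ℝ => α / (1 - α) * max 1 (-Real.log c)) 0 := by
      apply ContinuousAt.mul _ continuousAt_const
      exact ContinuousAt.div continuousAt_id (continuousAt_const.sub continuousAt_id)
        (by norm_num)
    have ht := hcont.tendsto
    norm_num at ht
    exact ht.mono_left nhdsWithin_le_nhds

end
end

section
/- With the same nested Monte Carlo estimator g̃, assuming additionally |h| ≤ C_h and Var_x[h(E_θ[w^α])] ≤ σ_h², the variance satisfies Var[g̃(ξ)] ≤ σ_h²/N + 4 C_h L_h σ_w / (N√M). -/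
open MeasureTheory Real ProbabilityTheory

noncomputable section

namespace NMC

variable {α : Type*} [MeasurableSpace α] (ν : Measure α) [IsProbabilityMeasure ν]

lemma map_eval_pi (n : ℕ) (i : Fin n) :
    Measure.map (fun y : Fin n → α => y i) (Measure.pi fun _ => ν) = ν := by
  ext s hs
  rw [Measure.map_apply (measurable_pi_apply i) hs,
    show (fun y : Fin n → α => y i) ⁻¹' s
      = Set.pi Set.univ (Function.update (fun _ => (Set.univ : Set α)) i s) from
      Set.eval_preimage, Measure.pi_pi]
  refine Finset.prod_eq_single_of_mem i (Finset.mem_univ i) (fun j _ hj => ?_) |>.trans ?_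
  · rw [Function.update_of_ne hj]; simp
  · rw [Function.update_self]

lemma indepFun_eval (n : ℕ) {i j : Fin n} (hij : i ≠ j) :
    IndepFun (fun y : Fin n → α => y i) (fun y : Fin n → α => y j)
      (Measure.pi fun _ => ν) := by
  rw [indepFun_iff_measure_inter_preimage_eq_mul]
  intro s t hs ht
  have h1 : (Measure.pi fun _ : Fin n => ν) ((fun y : Fin n → α => y i) ⁻¹' s) = ν s := by
    conv_rhs => rw [← map_eval_pi ν n i]
    rw [Measure.map_apply (measurable_pi_apply i) hs]
  have h2 : (Measure.pi fun _ : Fin n => ν) ((fun y : Fin n → α => y j) ⁻¹' t) = ν t := by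
    conv_rhs => rw [← map_eval_pi ν n j]
    rw [Measure.map_apply (measurable_pi_apply j) ht]
  rw [h1, h2]
  have hset : (fun y : Fin n → α => y i) ⁻¹' s ∩ (fun y : Fin n → α => y j) ⁻¹' t
      = Set.pi Set.univ (fun k => Function.update (fun _ => (Set.univ : Set α)) i s k
          ∩ Function.update (fun _ => (Set.univ : Set α)) j t k) := by
    rw [Set.pi_inter_distrib]
    rw [show (fun y : Fin n → α => y i) ⁻¹' s
      = Set.pi Set.univ (Function.update (fun _ => (Set.univ : Set α)) i s) from
      Set.eval_preimage]
    rw [show (fun y : Fin n → α => y j) ⁻¹' t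
      = Set.pi Set.univ (Function.update (fun _ => (Set.univ : Set α)) j t) from
      Set.eval_preimage]
  rw [hset, Measure.pi_pi]
  have hprod : ∀ k ∈ (Finset.univ : Finset (Fin n)), k ∉ ({i, j} : Finset (Fin n)) →
      ν (Function.update (fun _ => (Set.univ : Set α)) i s k
        ∩ Function.update (fun _ => (Set.univ : Set α)) j t k) = 1 := by
    intro k _ hk
    simp only [Finset.mem_insert, Finset.mem_singleton, not_or] at hk
    rw [Function.update_of_ne hk.1, Function.update_of_ne hk.2]
    simp
  rw [← Finset.prod_subset (Finset.subset_univ ({i, j} : Finset (Fin n))) hprod,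
    Finset.prod_pair hij]
  rw [Function.update_self, Function.update_of_ne hij.symm, Function.update_self,
    Function.update_of_ne hij]
  simp

lemma memℒp_eval {f : α → ℝ} (hf : MemLp f 2 ν) (n : ℕ) (i : Fin n) :
    MemLp (fun y : Fin n → α => f (y i)) 2 (Measure.pi fun _ => ν) := by
  have hmap := map_eval_pi ν n i
  have hf' : MemLp f 2 (Measure.map (fun y : Fin n → α => y i) (Measure.pi fun _ => ν)) := by
    rw [hmap]; exact hf
  exact (memLp_map_measure_iff (by rw [hmap]; exact hf.aestronglyMeasurable)
    (measurable_pi_apply i).aemeasurable).mp hf'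

lemma integral_eval {f : α → ℝ} (hf : AEStronglyMeasurable f ν) (n : ℕ) (i : Fin n) :
    ∫ y : Fin n → α, f (y i) ∂(Measure.pi fun _ => ν) = ∫ a, f a ∂ν := by
  conv_rhs => rw [← map_eval_pi ν n i]
  rw [integral_map (measurable_pi_apply i).aemeasurable (by rw [map_eval_pi ν n i]; exact hf)]

lemma integrable_eval {f : α → ℝ} (hf : Integrable f ν) (n : ℕ) (i : Fin n) :
    Integrable (fun y : Fin n → α => f (y i)) (Measure.pi fun _ => ν) := by
  have hmap := map_eval_pi ν n i
  have : Integrable f (Measure.map (fun y : Fin n → α => y i) (Measure.pi fun _ => ν)) := by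
    rw [hmap]; exact hf
  exact (integrable_map_measure (by rw [hmap]; exact hf.aestronglyMeasurable)
    (measurable_pi_apply i).aemeasurable).mp this

lemma integral_avg {f : α → ℝ} (hf : Integrable f ν) (n : ℕ) (hn : 0 < n) :
    ∫ y : Fin n → α, (n : ℝ)⁻¹ * ∑ i : Fin n, f (y i) ∂(Measure.pi fun _ => ν)
      = ∫ a, f a ∂ν := by
  rw [integral_const_mul, integral_finset_sum _ (fun i _ => integrable_eval ν hf n i)]
  have : ∀ i : Fin n, ∫ y : Fin n → α, f (y i) ∂(Measure.pi fun _ => ν) = ∫ a, f a ∂ν :=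
    fun i => integral_eval ν hf.aestronglyMeasurable n i
  rw [Finset.sum_congr rfl (fun i _ => this i), Finset.sum_const, Finset.card_univ,
    Fintype.card_fin, nsmul_eq_mul]
  have hn' : (n : ℝ) ≠ 0 := Nat.cast_ne_zero.mpr hn.ne'
  field_simp

lemma variance_eq_integral {f : α → ℝ} (hf : MemLp f 2 ν) :
    variance f ν = ∫ a, (f a - ∫ a', f a' ∂ν) ^ 2 ∂ν := by
  exact ProbabilityTheory.variance_eq_integral hf.aemeasurable

lemma variance_eval {f : α → ℝ} (hfm : Measurable f) (hf : MemLp f 2 ν) (n : ℕ) (i : Fin n) :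
    variance (fun y : Fin n → α => f (y i)) (Measure.pi fun _ => ν) = variance f ν := by
  rw [variance_eq_sub (memℒp_eval ν hf n i), variance_eq_sub hf]
  have h1 : ∫ y : Fin n → α, ((fun y : Fin n → α => f (y i)) ^ 2) y ∂(Measure.pi fun _ => ν)
      = ∫ a, (f ^ 2) a ∂ν := by
    simp only [Pi.pow_apply]
    exact integral_eval ν ((hfm.pow_const 2).aestronglyMeasurable) n i
  rw [h1, integral_eval ν hf.aestronglyMeasurable n i]

lemma avg_memℒp {f : α → ℝ} (hf : MemLp f 2 ν) (n : ℕ) :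
    MemLp (fun y : Fin n → α => (n : ℝ)⁻¹ * ∑ i : Fin n, f (y i)) 2
      (Measure.pi fun _ => ν) := by
  have : (fun y : Fin n → α => (n : ℝ)⁻¹ * ∑ i : Fin n, f (y i))
      = fun y => (n : ℝ)⁻¹ * (∑ i : Fin n, fun y : Fin n → α => f (y i)) y := by
    funext y; simp
  rw [this]
  exact (memLp_finset_sum' _ (fun i _ => memℒp_eval ν hf n i)).const_mul _

lemma avg_var {f : α → ℝ} (hfm : Measurable f) (hf : MemLp f 2 ν) (n : ℕ) (hn : 0 < n) :
    variance (fun y : Fin n → α => (n : ℝ)⁻¹ * ∑ i : Fin n, f (y i))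
      (Measure.pi fun _ => ν) = variance f ν / n := by
  have hX : ∀ i : Fin n, MemLp (fun y : Fin n → α => f (y i)) 2 (Measure.pi fun _ => ν) :=
    fun i => memℒp_eval ν hf n i
  have hsum : variance (∑ i : Fin n, fun y : Fin n → α => f (y i)) (Measure.pi fun _ => ν)
      = ∑ i : Fin n, variance (fun y : Fin n → α => f (y i)) (Measure.pi fun _ => ν) := by
    refine IndepFun.variance_sum (fun i _ => hX i) ?_
    intro i _ j _ hij
    exact (indepFun_eval ν n hij).comp hfm hfm
  have heq : (fun y : Fin n → α => (n : ℝ)⁻¹ * ∑ i : Fin n, f (y i))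
      = (n : ℝ)⁻¹ • (∑ i : Fin n, fun y : Fin n → α => f (y i)) := by
    funext y; simp [Finset.mul_sum]
  rw [heq, variance_smul, hsum]
  rw [Finset.sum_congr rfl (fun i _ => variance_eval ν hfm hf n i), Finset.sum_const,
    Finset.card_univ, Fintype.card_fin, nsmul_eq_mul]
  have hn' : (n : ℝ) ≠ 0 := Nat.cast_ne_zero.mpr hn.ne'
  field_simp

lemma variance_def'' {f : α → ℝ} (hf : MemLp f 2 ν) :
    variance f ν = ∫ a, (f a) ^ 2 ∂ν - (∫ a, f a ∂ν) ^ 2 := by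
  rw [variance_eq_sub hf]
  rfl

lemma abs_integral_le_sqrt {f : α → ℝ} (hf : MemLp f 2 ν) :
    ∫ a, |f a| ∂ν ≤ Real.sqrt (∫ a, (f a) ^ 2 ∂ν) := by
  have habs : MemLp (fun a => |f a|) 2 ν := by
    have := hf.norm
    simpa [Real.norm_eq_abs] using this
  have h := variance_nonneg (fun a => |f a|) ν
  rw [variance_def'' ν habs] at h
  have h2 : (∫ a, |f a| ∂ν) ^ 2 ≤ ∫ a, (f a) ^ 2 ∂ν := by
    have : ∫ a, |f a| ^ 2 ∂ν = ∫ a, (f a) ^ 2 ∂ν := by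
      congr 1; funext a; exact sq_abs _
    linarith [this ▸ h]
  exact (Real.le_sqrt (integral_nonneg (fun a => abs_nonneg _))
    (integral_nonneg (fun a => sq_nonneg _))).mpr h2

end NMC

lemma NMC.sq_sub_sq_le {a b c A : ℝ} (ha : |a| ≤ c) (hb : |b| ≤ c) (hA : |a - b| ≤ A) :
    a ^ 2 - b ^ 2 ≤ 2 * c * A := by
  have h1 := abs_le.mp ha
  have h2 := abs_le.mp hb
  have h3 := abs_le.mp hA
  nlinarith [h1.1, h1.2, h2.1, h2.2, h3.1, h3.2]

/-- Variance bound for the nested Monte Carlo estimator: if additionally `|h| ≤ C_h`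
and `Var_x[h(E_θ[W])] ≤ σ_h²`, then `Var[g̃] ≤ σ_h²/N + 4 C_h L_h σ_w / (N √M)`. -/
theorem nested_mc_variance_bound
    {𝒳 T : Type*} [MeasurableSpace 𝒳] [MeasurableSpace T]
    (μx : Measure 𝒳) (μθ : Measure T)
    [IsProbabilityMeasure μx] [IsProbabilityMeasure μθ]
    (W : 𝒳 → T → ℝ) (h : ℝ → ℝ) (Lh σw Ch σh : ℝ) (N M : ℕ)
    (hN : 0 < N) (hM : 0 < M) (hLh : 0 ≤ Lh) (hσw : 0 ≤ σw)
    (hCh : 0 ≤ Ch) (hσh : 0 ≤ σh)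
    (hWmeas : Measurable (Function.uncurry W)) (hhmeas : Measurable h)
    (hlip : ∀ a b : ℝ, |h a - h b| ≤ Lh * |a - b|)
    (hhbdd : ∀ a : ℝ, |h a| ≤ Ch)
    (hWint : ∀ x, Integrable (W x) μθ)
    (hWsq : ∀ x, Integrable (fun θ => (W x θ) ^ 2) μθ)
    (hvar : ∀ x, ∫ θ, (W x θ - ∫ θ', W x θ' ∂μθ) ^ 2 ∂μθ ≤ σw ^ 2)
    (hvarx : ∫ x, (h (∫ θ, W x θ ∂μθ)
        - ∫ x', h (∫ θ, W x' θ ∂μθ) ∂μx) ^ 2 ∂μx ≤ σh ^ 2)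
    (P : Measure ((Fin N → 𝒳) × (Fin N → Fin M → T)))
    (hP : P = (Measure.pi fun _ => μx).prod (Measure.pi fun _ => Measure.pi fun _ => μθ))
    (gtilde : (Fin N → 𝒳) × (Fin N → Fin M → T) → ℝ)
    (hgtilde : ∀ ω, gtilde ω
      = (N : ℝ)⁻¹ * ∑ i : Fin N, h ((M : ℝ)⁻¹ * ∑ j : Fin M, W (ω.1 i) (ω.2 i j)))
    (hgint : Integrable gtilde P)
    (hgsq : Integrable (fun ω => (gtilde ω) ^ 2) P) :
    ∫ ω, (gtilde ω - ∫ ω', gtilde ω' ∂P) ^ 2 ∂P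
      ≤ σh ^ 2 / N + 4 * Ch * Lh * σw / (N * Real.sqrt M) := by
  subst hP
  set m : 𝒳 → ℝ := fun x => ∫ θ, W x θ ∂μθ with hm_def
  set Q : Measure (𝒳 × (Fin M → T)) := μx.prod (Measure.pi fun _ : Fin M => μθ) with hQ_def
  set S : 𝒳 × (Fin M → T) → ℝ := fun p => (M : ℝ)⁻¹ * ∑ j : Fin M, W p.1 (p.2 j) with hS_def
  set F : 𝒳 × (Fin M → T) → ℝ := fun p => h (S p) with hF_def
  set Z : 𝒳 × (Fin M → T) → ℝ := fun p => h (m p.1) with hZ_def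
  -- measurability
  have hSmeas : Measurable S := by
    refine measurable_const.mul (Finset.measurable_sum _ fun j _ => ?_)
    exact hWmeas.comp (measurable_fst.prodMk ((measurable_pi_apply j).comp measurable_snd))
  have hmmeas : Measurable m := by
    have : StronglyMeasurable fun x => ∫ θ, Function.uncurry W (x, θ) ∂μθ :=
      hWmeas.stronglyMeasurable.integral_prod_right'
    exact this.measurable
  have hFmeas : Measurable F := hhmeas.comp hSmeas
  have hZmeas : Measurable Z := hhmeas.comp (hmmeas.comp measurable_fst)
  have hFmem : MemLp F 2 Q :=
    MemLp.of_bound hFmeas.aestronglyMeasurable Ch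
      (ae_of_all _ fun p => by simpa [Real.norm_eq_abs] using hhbdd (S p))
  have hZmem : MemLp Z 2 Q :=
    MemLp.of_bound hZmeas.aestronglyMeasurable Ch
      (ae_of_all _ fun p => by simpa [Real.norm_eq_abs] using hhbdd (m p.1))
  -- the measure-preserving equivalence
  set e := MeasurableEquiv.arrowProdEquivProdArrow 𝒳 (Fin M → T) (Fin N) with he_def
  have mp : MeasurePreserving e (Measure.pi fun _ : Fin N => Q)
      ((Measure.pi fun _ : Fin N => μx).prod
        (Measure.pi fun _ : Fin N => Measure.pi fun _ : Fin M => μθ)) :=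
    measurePreserving_arrowProdEquivProdArrow 𝒳 (Fin M → T) (Fin N)
      (fun _ => μx) (fun _ => Measure.pi fun _ : Fin M => μθ)
  have hcomp : ∀ y : Fin N → 𝒳 × (Fin M → T),
      gtilde (e y) = (N : ℝ)⁻¹ * ∑ i : Fin N, F (y i) := by
    intro y
    rw [hgtilde]
    rfl
  have hEg : ∫ ω, gtilde ω ∂((Measure.pi fun _ : Fin N => μx).prod
      (Measure.pi fun _ : Fin N => Measure.pi fun _ : Fin M => μθ)) = ∫ a, F a ∂Q := by
    rw [← mp.integral_comp e.measurableEmbedding gtilde]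
    simp only [hcomp]
    exact NMC.integral_avg Q (hFmem.integrable one_le_two) N hN
  have hLHS : ∫ ω, (gtilde ω - ∫ ω', gtilde ω' ∂((Measure.pi fun _ : Fin N => μx).prod
        (Measure.pi fun _ : Fin N => Measure.pi fun _ : Fin M => μθ))) ^ 2
      ∂((Measure.pi fun _ : Fin N => μx).prod
        (Measure.pi fun _ : Fin N => Measure.pi fun _ : Fin M => μθ))
      = variance F Q / N := by
    rw [← mp.integral_comp e.measurableEmbedding
      (fun ω => (gtilde ω - ∫ ω', gtilde ω' ∂((Measure.pi fun _ : Fin N => μx).prod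
        (Measure.pi fun _ : Fin N => Measure.pi fun _ : Fin M => μθ))) ^ 2)]
    simp only [hcomp, hEg]
    calc ∫ y : Fin N → 𝒳 × (Fin M → T),
          ((N : ℝ)⁻¹ * ∑ i : Fin N, F (y i) - ∫ a, F a ∂Q) ^ 2 ∂(Measure.pi fun _ => Q)
        = ∫ y : Fin N → 𝒳 × (Fin M → T),
          ((N : ℝ)⁻¹ * ∑ i : Fin N, F (y i)
            - ∫ y' : Fin N → 𝒳 × (Fin M → T), (N : ℝ)⁻¹ * ∑ i : Fin N, F (y' i)
              ∂(Measure.pi fun _ => Q)) ^ 2 ∂(Measure.pi fun _ => Q) := by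
          rw [NMC.integral_avg Q (hFmem.integrable one_le_two) N hN]
      _ = variance (fun y : Fin N → 𝒳 × (Fin M → T) => (N : ℝ)⁻¹ * ∑ i : Fin N, F (y i))
            (Measure.pi fun _ => Q) :=
          (NMC.variance_eq_integral _ (NMC.avg_memℒp Q hFmem N)).symm
      _ = variance F Q / N := NMC.avg_var Q hFmeas hFmem N hN
  rw [hLHS]
  -- transfer of integrals of functions of the first coordinate
  have hfst : Measure.map Prod.fst Q = μx := by
    rw [hQ_def, Measure.map_fst_prod]; simp
  have hint_fst : ∀ (g : 𝒳 → ℝ), AEStronglyMeasurable g μx →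
      ∫ p, g p.1 ∂Q = ∫ x, g x ∂μx := by
    intro g hg
    conv_rhs => rw [← hfst]
    rw [integral_map measurable_fst.aemeasurable (by rw [hfst]; exact hg)]
  -- variance of Z
  have hb : ∫ p, Z p ∂Q = ∫ x, h (m x) ∂μx :=
    hint_fst _ (hhmeas.comp hmmeas).aestronglyMeasurable
  have hvarZ : variance Z Q ≤ σh ^ 2 := by
    rw [NMC.variance_eq_integral Q hZmem]
    simp only [hZ_def, hb]
    rw [show ∫ p, h (m p.1) ∂Q = ∫ x, h (m x) ∂μx from hb]
    rw [hint_fst (fun x => (h (m x) - ∫ x', h (m x') ∂μx) ^ 2)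
      ((((hhmeas.comp hmmeas).sub measurable_const).pow_const 2).aestronglyMeasurable)]
    exact hvarx
  -- the deviation D and its second moment
  set D : 𝒳 × (Fin M → T) → ℝ := fun p => S p - m p.1 with hD_def
  have hDmeas : Measurable D := hSmeas.sub (hmmeas.comp measurable_fst)
  have hWxmeas : ∀ x, Measurable (W x) := fun x => hWmeas.comp measurable_prodMk_left
  have hWx2 : ∀ x, MemLp (W x) 2 μθ := fun x =>
    (memLp_two_iff_integrable_sq (hWint x).aestronglyMeasurable).mpr (hWsq x)
  have hinner : ∀ x, ∫ θs : Fin M → T,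
      ((M : ℝ)⁻¹ * ∑ j : Fin M, W x (θs j) - m x) ^ 2 ∂(Measure.pi fun _ : Fin M => μθ)
      = variance (W x) μθ / M := by
    intro x
    have e3 : ∫ θs : Fin M → T, (M : ℝ)⁻¹ * ∑ j : Fin M, W x (θs j)
        ∂(Measure.pi fun _ : Fin M => μθ) = m x := NMC.integral_avg μθ (hWint x) M hM
    calc ∫ θs : Fin M → T, ((M : ℝ)⁻¹ * ∑ j : Fin M, W x (θs j) - m x) ^ 2
          ∂(Measure.pi fun _ : Fin M => μθ)
        = ∫ θs : Fin M → T, ((M : ℝ)⁻¹ * ∑ j : Fin M, W x (θs j)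
            - ∫ θs' : Fin M → T, (M : ℝ)⁻¹ * ∑ j : Fin M, W x (θs' j)
              ∂(Measure.pi fun _ : Fin M => μθ)) ^ 2 ∂(Measure.pi fun _ : Fin M => μθ) := by
          rw [e3]
      _ = variance (fun θs : Fin M → T => (M : ℝ)⁻¹ * ∑ j : Fin M, W x (θs j))
            (Measure.pi fun _ : Fin M => μθ) :=
          (NMC.variance_eq_integral _ (NMC.avg_memℒp μθ (hWx2 x) M)).symm
      _ = variance (W x) μθ / M := NMC.avg_var μθ (hWxmeas x) (hWx2 x) M hM
  have hvarW : ∀ x, variance (W x) μθ ≤ σw ^ 2 := fun x => by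
    rw [NMC.variance_eq_integral μθ (hWx2 x)]; exact hvar x
  have hMpos : (0 : ℝ) < M := Nat.cast_pos.mpr hM
  have hinnerle : ∀ x, ∫ θs : Fin M → T,
      ((M : ℝ)⁻¹ * ∑ j : Fin M, W x (θs j) - m x) ^ 2 ∂(Measure.pi fun _ : Fin M => μθ)
      ≤ σw ^ 2 / M := fun x => by
    rw [hinner x]
    gcongr
    exact hvarW x
  -- integrability of D^2 over Q
  have hx_int : ∀ x, Integrable
      (fun θs : Fin M → T => ((M : ℝ)⁻¹ * ∑ j : Fin M, W x (θs j) - m x) ^ 2)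
      (Measure.pi fun _ : Fin M => μθ) := fun x =>
    ((NMC.avg_memℒp μθ (hWx2 x) M).sub (memLp_const (m x))).integrable_sq
  have hSM : StronglyMeasurable fun x => ∫ θs : Fin M → T,
      ((M : ℝ)⁻¹ * ∑ j : Fin M, W x (θs j) - m x) ^ 2 ∂(Measure.pi fun _ : Fin M => μθ) := by
    have hφ : StronglyMeasurable fun q : 𝒳 × (Fin M → T) =>
        ((M : ℝ)⁻¹ * ∑ j : Fin M, W q.1 (q.2 j) - m q.1) ^ 2 :=
      ((hSmeas.sub (hmmeas.comp measurable_fst)).pow_const 2).stronglyMeasurable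
    exact hφ.integral_prod_right'
  have hbound_int : Integrable (fun x => ∫ θs : Fin M → T,
      ((M : ℝ)⁻¹ * ∑ j : Fin M, W x (θs j) - m x) ^ 2
        ∂(Measure.pi fun _ : Fin M => μθ)) μx := by
    refine Integrable.mono' (integrable_const (σw ^ 2 / M)) hSM.aestronglyMeasurable
      (ae_of_all _ fun x => ?_)
    rw [Real.norm_eq_abs, abs_of_nonneg (integral_nonneg fun θs => sq_nonneg _)]
    exact hinnerle x
  have hDsq_int : Integrable (fun p => D p ^ 2) Q := by
    rw [hQ_def]
    refine (integrable_prod_iff ((hDmeas.pow_const 2)).aestronglyMeasurable).mpr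
      ⟨ae_of_all _ fun x => hx_int x, ?_⟩
    have heq : (fun x => ∫ θs : Fin M → T, ‖((fun p => D p ^ 2) (x, θs))‖
        ∂(Measure.pi fun _ : Fin M => μθ))
        = fun x => ∫ θs : Fin M → T, ((M : ℝ)⁻¹ * ∑ j : Fin M, W x (θs j) - m x) ^ 2
          ∂(Measure.pi fun _ : Fin M => μθ) := by
      funext x
      congr 1
      funext θs
      rw [Real.norm_eq_abs, abs_of_nonneg (sq_nonneg _)]
    rw [heq]
    exact hbound_int
  have hJ : ∫ p, D p ^ 2 ∂Q ≤ σw ^ 2 / M := by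
    rw [hQ_def, integral_prod _ (hQ_def ▸ hDsq_int)]
    refine le_trans (integral_mono hbound_int (integrable_const _) fun x => hinnerle x) ?_
    simp
  have hDmem : MemLp D 2 Q :=
    (memLp_two_iff_integrable_sq hDmeas.aestronglyMeasurable).mpr hDsq_int
  have hsqrtM : Real.sqrt (σw ^ 2 / M) = σw / Real.sqrt M := by
    rw [Real.sqrt_div (sq_nonneg σw), Real.sqrt_sq hσw]
  have hintabsD : ∫ p, |D p| ∂Q ≤ σw / Real.sqrt M := by
    refine (NMC.abs_integral_le_sqrt Q hDmem).trans ?_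
    rw [← hsqrtM]
    exact Real.sqrt_le_sqrt hJ
  have hFZint : Integrable (fun p => |F p - Z p|) Q :=
    ((hFmem.sub hZmem).integrable one_le_two).abs
  have hI : ∫ p, |F p - Z p| ∂Q ≤ Lh * (σw / Real.sqrt M) := by
    have h1 : ∫ p, |F p - Z p| ∂Q ≤ ∫ p, Lh * |D p| ∂Q := by
      refine integral_mono hFZint (((hDmem.integrable one_le_two).abs).const_mul Lh)
        fun p => ?_
      exact hlip (S p) (m p.1)
    rw [integral_const_mul] at h1
    exact h1.trans (mul_le_mul_of_nonneg_left hintabsD hLh)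
  -- bounds on the expectations of F and Z
  have hIF : |∫ p, F p ∂Q| ≤ Ch := by
    calc |∫ p, F p ∂Q| = ‖∫ p, F p ∂Q‖ := (Real.norm_eq_abs _).symm
      _ ≤ ∫ p, ‖F p‖ ∂Q := norm_integral_le_integral_norm F
      _ = ∫ p, |F p| ∂Q := by simp [Real.norm_eq_abs]
      _ ≤ ∫ p, Ch ∂Q := integral_mono (hFmem.integrable one_le_two).abs
          (integrable_const _) fun p => hhbdd (S p)
      _ = Ch := by simp
  have hIZ : |∫ p, Z p ∂Q| ≤ Ch := by
    calc |∫ p, Z p ∂Q| = ‖∫ p, Z p ∂Q‖ := (Real.norm_eq_abs _).symm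
      _ ≤ ∫ p, ‖Z p‖ ∂Q := norm_integral_le_integral_norm Z
      _ = ∫ p, |Z p| ∂Q := by simp [Real.norm_eq_abs]
      _ ≤ ∫ p, Ch ∂Q := integral_mono (hZmem.integrable one_le_two).abs
          (integrable_const _) fun p => hhbdd (m p.1)
      _ = Ch := by simp
  have hIpos : 0 ≤ ∫ p, |F p - Z p| ∂Q := integral_nonneg fun p => abs_nonneg _
  -- core comparison between the variances of F and Z
  have hcore : variance F Q ≤ variance Z Q + 4 * Ch * ∫ p, |F p - Z p| ∂Q := by
    rw [NMC.variance_def'' Q hFmem, NMC.variance_def'' Q hZmem]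
    have hptw : ∀ p, F p ^ 2 - Z p ^ 2 ≤ 2 * Ch * |F p - Z p| := fun p =>
      NMC.sq_sub_sq_le (show |F p| ≤ Ch from hhbdd (S p))
        (show |Z p| ≤ Ch from hhbdd (m p.1)) (le_refl _)
    have hd1 : ∫ p, F p ^ 2 ∂Q - ∫ p, Z p ^ 2 ∂Q ≤ 2 * Ch * ∫ p, |F p - Z p| ∂Q := by
      rw [← integral_sub hFmem.integrable_sq hZmem.integrable_sq]
      calc ∫ p, (F p ^ 2 - Z p ^ 2) ∂Q ≤ ∫ p, 2 * Ch * |F p - Z p| ∂Q :=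
            integral_mono (hFmem.integrable_sq.sub hZmem.integrable_sq)
              (hFZint.const_mul (2 * Ch)) fun p => hptw p
        _ = 2 * Ch * ∫ p, |F p - Z p| ∂Q := integral_const_mul _ _
    have hba : |(∫ p, Z p ∂Q) - ∫ p, F p ∂Q| ≤ ∫ p, |F p - Z p| ∂Q := by
      rw [← integral_sub (hZmem.integrable one_le_two) (hFmem.integrable one_le_two)]
      calc |∫ p, (Z p - F p) ∂Q| = ‖∫ p, (Z p - F p) ∂Q‖ := (Real.norm_eq_abs _).symm
        _ ≤ ∫ p, ‖Z p - F p‖ ∂Q := norm_integral_le_integral_norm _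
        _ = ∫ p, |F p - Z p| ∂Q := by
            congr 1
            funext p
            rw [Real.norm_eq_abs, abs_sub_comm]
    have hd2 : (∫ p, Z p ∂Q) ^ 2 - (∫ p, F p ∂Q) ^ 2 ≤ 2 * Ch * ∫ p, |F p - Z p| ∂Q :=
      NMC.sq_sub_sq_le hIZ hIF hba
    linarith [hd1, hd2]
  have hvarF : variance F Q ≤ σh ^ 2 + 4 * Ch * (Lh * (σw / Real.sqrt M)) := by
    have h2 : 4 * Ch * ∫ p, |F p - Z p| ∂Q ≤ 4 * Ch * (Lh * (σw / Real.sqrt M)) :=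
      mul_le_mul_of_nonneg_left hI (by positivity)
    linarith [hvarZ, hcore]
  have hNpos : (0 : ℝ) < N := Nat.cast_pos.mpr hN
  have hsM : (0 : ℝ) < Real.sqrt M := Real.sqrt_pos.mpr hMpos
  calc variance F Q / N ≤ (σh ^ 2 + 4 * Ch * (Lh * (σw / Real.sqrt M))) / N := by
        gcongr
      _ = σh ^ 2 / N + 4 * Ch * Lh * σw / (N * Real.sqrt M) := by
        field_simp

end
end

section
/- For two nondegenerate Gaussians q = N(μ_q, Σ_q) and p = N(μ_p, Σ_p) on ℝ^d with α ∈ (0,1), letting Σ_α = (α Σ_q^{-1} + (1−α) Σ_p^{-1})^{-1} and μ_α = Σ_α(α Σ_q^{-1} μ_q + (1−α) Σ_p^{-1} μ_p), the Rényi divergence is D_α(q‖p) = (1/(2(1−α)))(α μ_qᵀΣ_q^{-1}μ_q + (1−α) μ_pᵀΣ_p^{-1}μ_p − μ_αᵀΣ_α^{-1}μ_α) + (1/(2(α−1))) log( det Σ_α / (det Σ_q^α · det Σ_p^{1−α}) ). -/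
open MeasureTheory Matrix

noncomputable section

/-- Multivariate Gaussian density on `Fin d → ℝ` with mean `m` and covariance `S`. -/
def gaussDensity {d : ℕ} (m : Fin d → ℝ) (S : Matrix (Fin d) (Fin d) ℝ)
    (x : Fin d → ℝ) : ℝ :=
  (2 * Real.pi) ^ (-(d : ℝ) / 2) * S.det ^ (-(1 : ℝ) / 2) *
    Real.exp (-(1 / 2) * ((x - m) ⬝ᵥ S⁻¹.mulVec (x - m)))

open scoped MatrixOrder in
private lemma det_sqrt_pos' {d : ℕ} {M : Matrix (Fin d) (Fin d) ℝ} (hM : M.PosDef) :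
    0 < (CFC.sqrt M).det := by
  have hM0 : 0 ≤ M := Matrix.nonneg_iff_posSemidef.mpr hM.posSemidef
  have h0 : (CFC.sqrt M).det * (CFC.sqrt M).det = M.det := by
    rw [← Matrix.det_mul, CFC.sqrt_mul_sqrt_self M hM0]
  have h1 : 0 ≤ (CFC.sqrt M).det := by
    rw [(CFC.sqrt_nonneg M).posSemidef.isHermitian.det_eq_prod_eigenvalues]
    exact Finset.prod_nonneg fun i _ => (CFC.sqrt_nonneg M).posSemidef.eigenvalues_nonneg i
  rcases h1.lt_or_eq with h | h
  · exact h
  · exfalso; have := hM.det_pos; rw [← h0, ← h] at this; simp at this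

open scoped MatrixOrder in
private lemma integral_exp_neg_half_quad {d : ℕ} {M : Matrix (Fin d) (Fin d) ℝ}
    (hM : M.PosDef) :
    ∫ x : Fin d → ℝ, Real.exp (-(1/2) * (x ⬝ᵥ M.mulVec x))
      = (2 * Real.pi) ^ ((d : ℝ) / 2) * M.det ^ (-(1:ℝ) / 2) := by
  have hM0 : 0 ≤ M := Matrix.nonneg_iff_posSemidef.mpr hM.posSemidef
  set L := CFC.sqrt M with hL
  have hLdet : 0 < L.det := det_sqrt_pos' hM
  have hLsym : Lᵀ = L := (CFC.sqrt_nonneg M).posSemidef.isHermitian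
  have hquad : ∀ x : Fin d → ℝ, x ⬝ᵥ M.mulVec x = (L.mulVec x) ⬝ᵥ (L.mulVec x) := by
    intro x
    conv_lhs => rw [← CFC.sqrt_mul_sqrt_self M hM0, ← hL]
    rw [← Matrix.mulVec_mulVec, Matrix.dotProduct_mulVec]
    nth_rewrite 1 [← hLsym]
    rw [Matrix.vecMul_transpose]
  have hmap : Measure.map (Matrix.toLin' L) (volume : Measure (Fin d → ℝ))
      = ENNReal.ofReal (|L.det|⁻¹) • volume := by
    rw [← abs_inv]; exact Real.map_matrix_volume_pi_eq_smul_volume_pi hLdet.ne'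
  have hstep : ∫ x : Fin d → ℝ, Real.exp (-(1/2) * (x ⬝ᵥ M.mulVec x))
      = (L.det)⁻¹ * ∫ y : Fin d → ℝ, Real.exp (-(1/2) * (y ⬝ᵥ y)) := by
    have hmeas : AEMeasurable (Matrix.toLin' L) (volume : Measure (Fin d → ℝ)) :=
      (LinearMap.continuous_on_pi _).measurable.aemeasurable
    have hsm : AEStronglyMeasurable (fun y : Fin d → ℝ => Real.exp (-(1/2) * (y ⬝ᵥ y)))
        (Measure.map (Matrix.toLin' L) volume) := by
      apply Continuous.aestronglyMeasurable
      continuity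
    calc ∫ x : Fin d → ℝ, Real.exp (-(1/2) * (x ⬝ᵥ M.mulVec x))
        = ∫ x : Fin d → ℝ, Real.exp (-(1/2) * ((Matrix.toLin' L x) ⬝ᵥ (Matrix.toLin' L x))) := by
          simp_rw [hquad]; rfl
      _ = ∫ y, Real.exp (-(1/2) * (y ⬝ᵥ y)) ∂(Measure.map (Matrix.toLin' L) volume) :=
          (integral_map hmeas hsm).symm
      _ = (L.det)⁻¹ * ∫ y : Fin d → ℝ, Real.exp (-(1/2) * (y ⬝ᵥ y)) := by
          rw [hmap, integral_smul_measure, ENNReal.toReal_ofReal (by positivity),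
            abs_of_pos hLdet]
          simp
  rw [hstep]
  have hgauss : ∫ y : Fin d → ℝ, Real.exp (-(1/2) * (y ⬝ᵥ y))
      = (2 * Real.pi) ^ ((d : ℝ) / 2) := by
    have h1 : ∀ y : Fin d → ℝ,
        Real.exp (-(1/2) * (y ⬝ᵥ y)) = ∏ i, Real.exp (-(1/2) * (y i)^2) := by
      intro y
      rw [← Real.exp_sum]
      congr 1
      rw [dotProduct, Finset.mul_sum]
      congr 1; ext i; ring
    simp_rw [h1]
    rw [MeasureTheory.integral_fintype_prod_volume_eq_pow (ι := Fin d)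
      (fun t : ℝ => Real.exp (-(1/2) * t^2))]
    have h2 : ∫ t : ℝ, Real.exp (-(1/2) * t^2) = Real.sqrt (2 * Real.pi) := by
      rw [integral_gaussian]
      rw [show Real.pi / (1/2) = 2 * Real.pi by ring]
    rw [h2, Fintype.card_fin, ← Real.rpow_natCast (Real.sqrt (2*Real.pi)) d,
      Real.sqrt_eq_rpow, ← Real.rpow_mul (by positivity)]
    ring_nf
  rw [hgauss]
  have hdetM : M.det = L.det ^ 2 := by
    conv_lhs => rw [← CFC.sqrt_mul_sqrt_self M hM0]
    rw [Matrix.det_mul, sq]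
  rw [hdetM]
  rw [← Real.rpow_natCast L.det 2, ← Real.rpow_mul hLdet.le]
  norm_num
  rw [Real.rpow_neg_one]
  ring

private lemma quad_expand {d : ℕ} {S : Matrix (Fin d) (Fin d) ℝ} (hS : Sᵀ = S)
    (x m : Fin d → ℝ) :
    (x - m) ⬝ᵥ S.mulVec (x - m)
      = x ⬝ᵥ S.mulVec x - 2 * (x ⬝ᵥ S.mulVec m) + m ⬝ᵥ S.mulVec m := by
  have hsymm : m ⬝ᵥ S.mulVec x = x ⬝ᵥ S.mulVec m := by
    rw [Matrix.dotProduct_mulVec]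
    nth_rewrite 1 [← hS]
    rw [Matrix.vecMul_transpose, dotProduct_comm]
  rw [Matrix.mulVec_sub, dotProduct_sub, sub_dotProduct, sub_dotProduct, hsymm]
  ring

set_option maxHeartbeats 1600000 in
/-- Closed form for the Rényi divergence of order `α ∈ (0,1)` between two nondegenerate
Gaussians `q = N(μ_q, Σ_q)` and `p = N(μ_p, Σ_p)` on `ℝ^d`. -/
theorem renyi_gaussian_closed_form
    (d : ℕ) (μq μp : Fin d → ℝ) (Sq Sp : Matrix (Fin d) (Fin d) ℝ)
    (hSq : Sq.PosDef) (hSp : Sp.PosDef)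
    (α : ℝ) (hα : α ∈ Set.Ioo (0 : ℝ) 1)
    (Sα : Matrix (Fin d) (Fin d) ℝ) (hSα : Sα = (α • Sq⁻¹ + (1 - α) • Sp⁻¹)⁻¹)
    (μα : Fin d → ℝ)
    (hμα : μα = Sα.mulVec (α • Sq⁻¹.mulVec μq + (1 - α) • Sp⁻¹.mulVec μp)) :
    (1 / (α - 1)) * Real.log
        (∫ x : Fin d → ℝ, (gaussDensity μq Sq x) ^ α * (gaussDensity μp Sp x) ^ (1 - α))
      = (1 / (2 * (1 - α))) *
          (α * (μq ⬝ᵥ Sq⁻¹.mulVec μq) + (1 - α) * (μp ⬝ᵥ Sp⁻¹.mulVec μp)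
            - μα ⬝ᵥ Sα⁻¹.mulVec μα)
        + (1 / (2 * (α - 1))) *
            Real.log (Sα.det / (Sq.det ^ α * Sp.det ^ (1 - α))) := by
  obtain ⟨hα0, hα1⟩ := hα
  have hα1' : 0 < 1 - α := by linarith
  set A := Sq⁻¹ with hA
  set B := Sp⁻¹ with hB
  have hApd : A.PosDef := hSq.inv
  have hBpd : B.PosDef := hSp.inv
  have hAsym : Aᵀ = A := by
    have := hApd.isHermitian.eq
    rwa [Matrix.conjTranspose_eq_transpose_of_trivial] at this
  have hBsym : Bᵀ = B := by
    have := hBpd.isHermitian.eq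
    rwa [Matrix.conjTranspose_eq_transpose_of_trivial] at this
  set M := α • A + (1 - α) • B with hM
  -- M is positive definite
  have hMpd : M.PosDef := by
    refine Matrix.PosDef.of_dotProduct_mulVec_pos ?_ ?_
    · rw [Matrix.IsHermitian, Matrix.conjTranspose_eq_transpose_of_trivial,
        Matrix.transpose_add, Matrix.transpose_smul, Matrix.transpose_smul, hAsym, hBsym]
    · intro x hx
      have hsx : star x = x := by
        funext i; simp
      rw [hsx, Matrix.add_mulVec, Matrix.smul_mulVec, Matrix.smul_mulVec,
        dotProduct_add, dotProduct_smul, dotProduct_smul, smul_eq_mul, smul_eq_mul]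
      have h1 : 0 < x ⬝ᵥ A.mulVec x := by
        have := hApd.dotProduct_mulVec_pos hx
        rwa [hsx] at this
      have h2 : 0 < x ⬝ᵥ B.mulVec x := by
        have := hBpd.dotProduct_mulVec_pos hx
        rwa [hsx] at this
      positivity
  have hMdet : M.det ≠ 0 := hMpd.det_pos.ne'
  have hMsym : Mᵀ = M := by
    have := hMpd.isHermitian.eq
    rwa [Matrix.conjTranspose_eq_transpose_of_trivial] at this
  -- Sα = M⁻¹ and Sα⁻¹ = M
  have hSαM : Sα = M⁻¹ := hSα
  have hSαinv : Sα⁻¹ = M := by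
    rw [hSαM, Matrix.nonsing_inv_nonsing_inv M (isUnit_iff_ne_zero.mpr hMdet)]
  have hSαdet : Sα.det = (M.det)⁻¹ := by
    rw [hSαM, Matrix.det_nonsing_inv, Ring.inverse_eq_inv]
  have hSαdet_pos : 0 < Sα.det := by
    rw [hSαdet]; exact inv_pos.mpr hMpd.det_pos
  -- the mean identity : M *ᵥ μα = α • A *ᵥ μq + (1-α) • B *ᵥ μp
  set v := α • A.mulVec μq + (1 - α) • B.mulVec μp with hv
  have hMμα : M.mulVec μα = v := by
    rw [hμα, hSαM, Matrix.mulVec_mulVec, Matrix.mul_nonsing_inv M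
      (isUnit_iff_ne_zero.mpr hMdet), Matrix.one_mulVec]
  -- the constant term
  set C := α * (μq ⬝ᵥ A.mulVec μq) + (1 - α) * (μp ⬝ᵥ B.mulVec μp)
      - μα ⬝ᵥ M.mulVec μα with hC
  -- the completion-of-squares identity
  have hquadid : ∀ x : Fin d → ℝ,
      α * ((x - μq) ⬝ᵥ A.mulVec (x - μq)) + (1 - α) * ((x - μp) ⬝ᵥ B.mulVec (x - μp))
        = (x - μα) ⬝ᵥ M.mulVec (x - μα) + C := by
    intro x
    rw [quad_expand hAsym, quad_expand hBsym, quad_expand hMsym, hC]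
    have hMx : x ⬝ᵥ M.mulVec x
        = α * (x ⬝ᵥ A.mulVec x) + (1 - α) * (x ⬝ᵥ B.mulVec x) := by
      rw [hM, Matrix.add_mulVec, Matrix.smul_mulVec, Matrix.smul_mulVec,
        dotProduct_add, dotProduct_smul, dotProduct_smul, smul_eq_mul, smul_eq_mul]
    have hxμα : x ⬝ᵥ M.mulVec μα
        = α * (x ⬝ᵥ A.mulVec μq) + (1 - α) * (x ⬝ᵥ B.mulVec μp) := by
      rw [hMμα, hv, dotProduct_add, dotProduct_smul, dotProduct_smul, smul_eq_mul,
        smul_eq_mul]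
    rw [hMx, hxμα]
    ring
  -- pointwise form of the integrand
  have hdetq := hSq.det_pos
  have hdetp := hSp.det_pos
  set K := (2 * Real.pi) ^ (-(d : ℝ) / 2) * Sq.det ^ (-(1:ℝ) / 2 * α)
      * Sp.det ^ (-(1:ℝ) / 2 * (1 - α)) * Real.exp (-(1/2) * C) with hK
  have key : ∀ x : Fin d → ℝ,
      (gaussDensity μq Sq x) ^ α * (gaussDensity μp Sp x) ^ (1 - α)
        = K * Real.exp (-(1/2) * ((x - μα) ⬝ᵥ M.mulVec (x - μα))) := by
    intro x
    have h2πpos : (0:ℝ) < 2 * Real.pi := by positivity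
    have hsplit : ∀ (S : Matrix (Fin d) (Fin d) ℝ), 0 < S.det → ∀ t β : ℝ,
        ((2 * Real.pi) ^ (-(d : ℝ) / 2) * S.det ^ (-(1:ℝ) / 2) * Real.exp t) ^ β
          = (2 * Real.pi) ^ (-(d : ℝ) / 2 * β) * S.det ^ (-(1:ℝ) / 2 * β)
            * Real.exp (t * β) := by
      intro S hS t β
      rw [Real.mul_rpow (by positivity) (Real.exp_pos _).le,
        Real.mul_rpow (Real.rpow_nonneg h2πpos.le _) (Real.rpow_nonneg hS.le _),
        ← Real.rpow_mul h2πpos.le, ← Real.rpow_mul hS.le, ← Real.exp_mul]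
    unfold gaussDensity
    rw [hsplit Sq hdetq _ α, hsplit Sp hdetp _ (1 - α)]
    have h2π : (2 * Real.pi) ^ (-(d : ℝ) / 2 * α) * (2 * Real.pi) ^ (-(d : ℝ) / 2 * (1 - α))
        = (2 * Real.pi) ^ (-(d : ℝ) / 2) := by
      rw [← Real.rpow_add (by positivity)]
      ring_nf
    have hexp : Real.exp (-(1/2) * ((x - μq) ⬝ᵥ A.mulVec (x - μq)) * α)
          * Real.exp (-(1/2) * ((x - μp) ⬝ᵥ B.mulVec (x - μp)) * (1 - α))
        = Real.exp (-(1/2) * C)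
          * Real.exp (-(1/2) * ((x - μα) ⬝ᵥ M.mulVec (x - μα))) := by
      rw [← Real.exp_add, ← Real.exp_add]
      congr 1
      have := hquadid x
      linarith
    calc (2 * Real.pi) ^ (-(d : ℝ) / 2 * α) * Sq.det ^ (-(1:ℝ) / 2 * α)
          * Real.exp (-(1/2) * ((x - μq) ⬝ᵥ A.mulVec (x - μq)) * α)
          * ((2 * Real.pi) ^ (-(d : ℝ) / 2 * (1 - α)) * Sp.det ^ (-(1:ℝ) / 2 * (1 - α))
            * Real.exp (-(1/2) * ((x - μp) ⬝ᵥ B.mulVec (x - μp)) * (1 - α)))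
        = ((2 * Real.pi) ^ (-(d : ℝ) / 2 * α) * (2 * Real.pi) ^ (-(d : ℝ) / 2 * (1 - α)))
          * (Sq.det ^ (-(1:ℝ) / 2 * α) * Sp.det ^ (-(1:ℝ) / 2 * (1 - α)))
          * (Real.exp (-(1/2) * ((x - μq) ⬝ᵥ A.mulVec (x - μq)) * α)
            * Real.exp (-(1/2) * ((x - μp) ⬝ᵥ B.mulVec (x - μp)) * (1 - α))) := by ring
      _ = K * Real.exp (-(1/2) * ((x - μα) ⬝ᵥ M.mulVec (x - μα))) := by
          rw [h2π, hexp, hK]; ring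
  -- compute the integral
  have hint : (∫ x : Fin d → ℝ, (gaussDensity μq Sq x) ^ α * (gaussDensity μp Sp x) ^ (1 - α))
      = Sq.det ^ (-(1:ℝ) / 2 * α) * Sp.det ^ (-(1:ℝ) / 2 * (1 - α)) * Sα.det ^ ((1:ℝ)/2)
        * Real.exp (-(1/2) * C) := by
    have e1 : (∫ x : Fin d → ℝ, (gaussDensity μq Sq x) ^ α * (gaussDensity μp Sp x) ^ (1 - α))
        = ∫ x : Fin d → ℝ, K * Real.exp (-(1/2) * ((x - μα) ⬝ᵥ M.mulVec (x - μα))) := by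
      congr 1; ext x; exact key x
    rw [e1, MeasureTheory.integral_const_mul]
    have e2 : (∫ x : Fin d → ℝ, Real.exp (-(1/2) * ((x - μα) ⬝ᵥ M.mulVec (x - μα))))
        = ∫ y : Fin d → ℝ, Real.exp (-(1/2) * (y ⬝ᵥ M.mulVec y)) :=
      integral_sub_right_eq_self (fun y : Fin d → ℝ =>
        Real.exp (-(1/2) * (y ⬝ᵥ M.mulVec y))) μα
    rw [e2, integral_exp_neg_half_quad hMpd]
    have e3 : M.det ^ (-(1:ℝ)/2) = Sα.det ^ ((1:ℝ)/2) := by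
      have : M.det = (Sα.det)⁻¹ := by rw [hSαdet, inv_inv]
      rw [this, ← Real.rpow_neg_one Sα.det, ← Real.rpow_mul hSαdet_pos.le]
      norm_num
    rw [e3, hK]
    have h2π1 : (2 * Real.pi) ^ (-(d : ℝ) / 2) * (2 * Real.pi) ^ ((d : ℝ) / 2) = 1 := by
      rw [← Real.rpow_add (by positivity)]
      have hz : -(d : ℝ) / 2 + (d : ℝ) / 2 = 0 := by ring
      rw [hz, Real.rpow_zero]
    calc (2 * Real.pi) ^ (-(d : ℝ) / 2) * Sq.det ^ (-(1:ℝ) / 2 * α)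
          * Sp.det ^ (-(1:ℝ) / 2 * (1 - α)) * Real.exp (-(1/2) * C)
          * ((2 * Real.pi) ^ ((d : ℝ) / 2) * Sα.det ^ ((1:ℝ)/2))
        = ((2 * Real.pi) ^ (-(d : ℝ) / 2) * (2 * Real.pi) ^ ((d : ℝ) / 2))
          * (Sq.det ^ (-(1:ℝ) / 2 * α) * Sp.det ^ (-(1:ℝ) / 2 * (1 - α)) * Sα.det ^ ((1:ℝ)/2)
            * Real.exp (-(1/2) * C)) := by ring
      _ = Sq.det ^ (-(1:ℝ) / 2 * α) * Sp.det ^ (-(1:ℝ) / 2 * (1 - α)) * Sα.det ^ ((1:ℝ)/2)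
          * Real.exp (-(1/2) * C) := by rw [h2π1]; ring
  -- take logs
  rw [hint]
  have hlog : Real.log (Sq.det ^ (-(1:ℝ) / 2 * α) * Sp.det ^ (-(1:ℝ) / 2 * (1 - α))
        * Sα.det ^ ((1:ℝ)/2) * Real.exp (-(1/2) * C))
      = (-(1:ℝ) / 2 * α) * Real.log Sq.det + (-(1:ℝ) / 2 * (1 - α)) * Real.log Sp.det
        + (1/2) * Real.log Sα.det + (-(1/2) * C) := by
    rw [Real.log_mul (by positivity) (Real.exp_ne_zero _),
      Real.log_mul (by positivity) (by positivity),
      Real.log_mul (by positivity) (by positivity),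
      Real.log_rpow hdetq, Real.log_rpow hdetp, Real.log_rpow hSαdet_pos, Real.log_exp]
  rw [hlog]
  have hrhslog : Real.log (Sα.det / (Sq.det ^ α * Sp.det ^ (1 - α)))
      = Real.log Sα.det - (α * Real.log Sq.det + (1 - α) * Real.log Sp.det) := by
    rw [Real.log_div hSαdet_pos.ne' (by positivity),
      Real.log_mul (by positivity) (by positivity),
      Real.log_rpow hdetq, Real.log_rpow hdetp]
  rw [hrhslog]
  have hCeq : μα ⬝ᵥ Sα⁻¹.mulVec μα = μα ⬝ᵥ M.mulVec μα := by rw [hSαinv]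
  rw [hCeq, hC]
  have hαne : α - 1 ≠ 0 := by linarith
  have h1αne : 1 - α ≠ 0 := by linarith
  field_simp
  ring

end
end
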